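/- arXiv:1111.7218 — 4 statements merged into one kernel-verified Lean document; each statement's English description precedes it below -/
import Mathlib

section
/- Let $N$ be a nonnegative local martingale with $N_0 = 1$ on a filtered probability space, and suppose $Q$ is a measure such that $M_t = (1/N_t)\mathbf 1_{\{\tau > t\}}$ is the density of $P$ with respect to $Q$ on each $\mathcal G_t$. Then for every $t \geq 0$, $Q(\tau > t) = E^P[N_t]$. Consequently, $N$ is a strict local martingale under $P$ (i.e., $E^P[N_t] < 1$ for some $t$) if and only if $Q(\tau < \infty) > 0$. -/
/-!
Since `M_t` is the density of `P` with respect to `Q` on `𝓖_t` and `N_t` is `𝓖_t`-measurable,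
`E^P[N_t] = E^Q[M_t N_t]`, and `M_t N_t = 1_{τ > t}`; this gives `Q(τ > t) = E^P[N_t]`.
Hence `E^P[N_t] < 1` for some `t` iff `Q(τ ≤ t) > 0` for some `t`, and as `{τ < ∞}` is the
countable union of the sets `{τ ≤ n}`, this happens iff `Q(τ < ∞) > 0`.
-/

open MeasureTheory
open scoped NNReal ENNReal

section ChangeOfMeasure

variable {Ω : Type*} {m m0 : MeasurableSpace Ω} {P Q : Measure Ω} {f : Ω → ℝ}

theorem trim_eq_trim_withDensity_ofReal (hm : m ≤ m0) [IsFiniteMeasure P] (hf0 : 0 ≤ᵐ[Q] f)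
    (hfi : Integrable f Q) (hdens : ∀ s, MeasurableSet[m] s → ∫ ω in s, f ω ∂Q = P.real s) :
    P.trim hm = (Q.withDensity fun ω ↦ ENNReal.ofReal (f ω)).trim hm := by
  refine @Measure.ext Ω m _ _ fun s hs ↦ ?_
  rw [trim_measurableSet_eq hm hs, trim_measurableSet_eq hm hs, withDensity_apply _ (hm s hs),
    ← ofReal_integral_eq_lintegral_ofReal hfi.integrableOn (ae_restrict_of_ae hf0), hdens s hs,
    measureReal_def, ENNReal.ofReal_toReal (measure_ne_top P s)]

theorem integral_eq_integral_mul_of_setIntegral_eq (hm : m ≤ m0) [IsFiniteMeasure P]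
    (hf0 : 0 ≤ᵐ[Q] f) (hfi : Integrable f Q)
    (hdens : ∀ s, MeasurableSet[m] s → ∫ ω in s, f ω ∂Q = P.real s)
    {g : Ω → ℝ} (hg : StronglyMeasurable[m] g) :
    ∫ ω, g ω ∂P = ∫ ω, f ω * g ω ∂Q :=
  calc ∫ ω, g ω ∂P = ∫ ω, g ω ∂(P.trim hm) := integral_trim hm hg
    _ = ∫ ω, g ω ∂(Q.withDensity fun ω ↦ ENNReal.ofReal (f ω)) := by
      rw [trim_eq_trim_withDensity_ofReal hm hf0 hfi hdens, integral_trim hm hg]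
    _ = ∫ ω, (ENNReal.ofReal (f ω)).toReal • g ω ∂Q :=
      integral_withDensity_eq_integral_toReal_smul₀ hfi.aemeasurable.ennreal_ofReal
        (ae_of_all _ fun _ ↦ ENNReal.ofReal_lt_top) g
    _ = ∫ ω, f ω * g ω ∂Q :=
      integral_congr_ae <| hf0.mono fun ω hω ↦ by
        dsimp only
        rw [ENNReal.toReal_ofReal hω, smul_eq_mul]

end ChangeOfMeasure

theorem measureReal_lt_one_iff {Ω : Type*} {m0 : MeasurableSpace Ω} {μ : Measure Ω}
    [IsFiniteMeasure μ] {s : Set Ω} : μ.real s < 1 ↔ μ s < 1 := by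
  rw [measureReal_def, ← ENNReal.toReal_one,
    ENNReal.toReal_lt_toReal (measure_ne_top _ _) ENNReal.one_ne_top]

theorem integral_indicator_one₀ {Ω : Type*} {m0 : MeasurableSpace Ω} {μ : Measure Ω} {s : Set Ω}
    (hs : NullMeasurableSet s μ) : ∫ ω, s.indicator 1 ω ∂μ = μ.real s := by
  rw [integral_indicator₀ hs, Pi.one_def, setIntegral_const, smul_eq_mul, mul_one]

section ExplosionTime

variable {Ω : Type*} {m0 : MeasurableSpace Ω} {μ : Measure Ω} {τ : Ω → ℝ≥0∞}

theorem measure_setOf_lt_top_eq_zero_iff :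
    μ {ω | τ ω < ∞} = 0 ↔ ∀ t : ℝ≥0, μ {ω | τ ω ≤ t} = 0 := by
  refine ⟨fun h t ↦ measure_mono_null (fun ω hω ↦ hω.trans_lt ENNReal.coe_lt_top) h,
    fun h ↦ measure_mono_null (fun ω hω ↦ ?_) (measure_iUnion_null fun n : ℕ ↦ h n)⟩
  obtain ⟨n, hn⟩ := ENNReal.exists_nat_gt hω.ne
  exact Set.mem_iUnion.2 ⟨n, by simpa using hn.le⟩

theorem exists_prob_lt_one_iff_pos_prob_lt_top [IsProbabilityMeasure μ]
    (hτ : ∀ t : ℝ≥0, NullMeasurableSet {ω | (t : ℝ≥0∞) < τ ω} μ) :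
    (∃ t : ℝ≥0, μ {ω | (t : ℝ≥0∞) < τ ω} < 1) ↔ 0 < μ {ω | τ ω < ∞} := by
  rw [pos_iff_ne_zero, Ne, measure_setOf_lt_top_eq_zero_iff, not_forall]
  refine exists_congr fun t ↦ ?_
  have hcompl : {ω | τ ω ≤ t} = {ω | (t : ℝ≥0∞) < τ ω}ᶜ := by ext; simp
  rw [hcompl, prob_compl_eq_zero_iff₀ (hτ t), prob_le_one.lt_iff_ne]

end ExplosionTime

theorem follmer_mass_and_strictness_general
    {Ω : Type*} {m0 : MeasurableSpace Ω} (P Q : Measure Ω)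
    [IsProbabilityMeasure P] [IsProbabilityMeasure Q]
    (𝓖 : Filtration ℝ≥0 m0)
    (N : ℝ≥0 → Ω → ℝ) (M : ℝ≥0 → Ω → ℝ) (τ : Ω → ℝ≥0∞)
    (hNpos : ∀ t ω, 0 < N t ω)
    (hNadapted : ∀ t, StronglyMeasurable[𝓖 t] (N t))
    (hM : ∀ t ω, M t ω = if (t : ℝ≥0∞) < τ ω then (N t ω)⁻¹ else 0)
    -- `M_t` is the Radon–Nikodym density of `P` with respect to `Q` on `𝓖_t`, for each `t`:
    (hdens : ∀ t, ∀ s : Set Ω, MeasurableSet[𝓖 t] s → ∫ ω in s, M t ω ∂Q = (P s).toReal) :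
    (∀ t : ℝ≥0, (Q {ω | (t : ℝ≥0∞) < τ ω}).toReal = ∫ ω, N t ω ∂P)
      ∧ ((∃ t : ℝ≥0, ∫ ω, N t ω ∂P < 1) ↔ 0 < Q {ω | τ ω < ∞}) := by
  have hM_nonneg : ∀ t, 0 ≤ M t := fun t ω ↦ by
    rw [Pi.zero_apply, hM]
    split_ifs
    exacts [inv_nonneg.2 (hNpos t ω).le, le_rfl]
  have hM_int : ∀ t, Integrable (M t) Q := fun t ↦
    Integrable.of_integral_ne_zero <| by
      rw [← setIntegral_univ, hdens t _ MeasurableSet.univ, measure_univ]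
      exact one_ne_zero
  have hMN : ∀ t, M t * N t = {ω | (t : ℝ≥0∞) < τ ω}.indicator 1 := fun t ↦ funext fun ω ↦ by
    by_cases h : (t : ℝ≥0∞) < τ ω
    · simp [hM, h, (hNpos t ω).ne']
    · simp [hM, h]
  -- `τ` is not assumed measurable: the survival sets are level sets of `M_t N_t`.
  have hsurvival : ∀ t : ℝ≥0, NullMeasurableSet {ω | (t : ℝ≥0∞) < τ ω} Q := fun t ↦
    (aemeasurable_indicator_const_iff (1 : ℝ)).1 <| hMN t ▸
      (hM_int t).aemeasurable.mul ((hNadapted t).mono (𝓖.le t)).aemeasurable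
  have hmass : ∀ t : ℝ≥0, (Q {ω | (t : ℝ≥0∞) < τ ω}).toReal = ∫ ω, N t ω ∂P := fun t ↦ by
    rw [integral_eq_integral_mul_of_setIntegral_eq (𝓖.le t) (ae_of_all _ (hM_nonneg t))
      (hM_int t) (hdens t) (hNadapted t), ← measureReal_def,
      ← integral_indicator_one₀ (hsurvival t), ← hMN t, Pi.mul_def]
  refine ⟨hmass, ?_⟩
  simp_rw [← hmass, ← measureReal_def, measureReal_lt_one_iff]
  exact exists_prob_lt_one_iff_pos_prob_lt_top hsurvival

/-- With `M_t = (1/N_t) 1_{τ>t}` the density of `P` w.r.t. `Q` on each `𝓖_t`, one has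
`Q(τ > t) = E^P[N_t]` for all `t`; consequently `N` is a strict local martingale under `P`
(i.e. `E^P[N_t] < 1` for some `t`, given `N_0 = 1`) iff `Q(τ < ∞) > 0`. -/
theorem follmer_mass_and_strictness
    {Ω : Type*} {m0 : MeasurableSpace Ω} (P Q : Measure Ω)
    [IsProbabilityMeasure P] [IsProbabilityMeasure Q]
    (𝓖 : Filtration ℝ≥0 m0)
    (N : ℝ≥0 → Ω → ℝ) (M : ℝ≥0 → Ω → ℝ) (τ : Ω → ℝ≥0∞)
    (hNpos : ∀ t ω, 0 < N t ω)
    (hN0 : ∀ ω, N 0 ω = 1)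
    (hNadapted : ∀ t, StronglyMeasurable[𝓖 t] (N t))
    (hNint : ∀ t, Integrable (N t) P)
    (hM : ∀ t ω, M t ω = if (t : ℝ≥0∞) < τ ω then (N t ω)⁻¹ else 0)
    -- `M_t` is the Radon–Nikodym density of `P` with respect to `Q` on `𝓖_t`, for each `t`:
    (hdens : ∀ t, ∀ s : Set Ω, MeasurableSet[𝓖 t] s → ∫ ω in s, M t ω ∂Q = (P s).toReal)
    (hPτ : ∀ t : ℝ≥0, P {ω | (t : ℝ≥0∞) < τ ω} = 1) :
    (∀ t : ℝ≥0, (Q {ω | (t : ℝ≥0∞) < τ ω}).toReal = ∫ ω, N t ω ∂P)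
      ∧ ((∃ t : ℝ≥0, ∫ ω, N t ω ∂P < 1) ↔ 0 < Q {ω | τ ω < ∞}) :=
  follmer_mass_and_strictness_general P Q 𝓖 N M τ hNpos hNadapted hM hdens
end

section
/- Let $Q_0$ be the Föllmer measure of the positive local martingale $N$, constructed so that $dQ_0 = N_{\tau_n} dP$ on $\mathcal G_{\tau_n}$ for each $n$, where $\tau_n = n \wedge \inf\{t : N_t \geq n\}$ and $\tau = \lim_n \tau_n$. Then $\tau_n < \tau$ holds $Q_0$-almost surely for every $n$, and on $\{\tau < \infty\}$ the left limit satisfies $N_{\tau-} = \infty$ (equivalently $M_{\tau-} = 0$) $Q_0$-almost surely; i.e., $N$ explodes continuously and does not jump to infinity. -/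
open MeasureTheory Filter Topology
open scoped NNReal ENNReal

/-!
The first claim is pathwise: if `τ_n = τ`, then `τ_k = τ_n < k` for all large `k`, and
right-continuity gives `N_{τ_k} ≥ k`, which is impossible for `k > N_{τ_n}`.

For the second, suppose `τ ≤ m` and `N_s < c` for times `s ↑ τ` arbitrarily close to `τ`.
Right-continuity turns this into a countable event: for every `n` there are a dyadic time `q`
and an index `K` with `τ_n < q < τ_K` and `N_q < c`. Optional sampling of the `P`-martingale `N^{τ_K}` at the
first such dyadic time bounds the `Q₀`-mass of this event by `c · P(τ_n ≤ m)`, and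
`P(τ_n ≤ m) ≤ 1/n` by Markov's inequality, because `N_{τ_n} ≥ n` on `{τ_n < n}` and
`E_P N_{τ_n} = 1`. Letting `n → ∞`, the event is `Q₀`-null.
-/

noncomputable def entryTime (f : ℝ≥0 → ℝ) (r : ℝ) : ℝ≥0∞ :=
  sInf {t : ℝ≥0∞ | ∃ s : ℝ≥0, t = (s : ℝ≥0∞) ∧ r ≤ f s}

lemma entryTime_mono (f : ℝ≥0 → ℝ) {r r' : ℝ} (h : r ≤ r') : entryTime f r ≤ entryTime f r' :=
  sInf_le_sInf fun _ ⟨s, hs, hr⟩ => ⟨s, hs, h.trans hr⟩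

lemma le_apply_of_entryTime_eq {f : ℝ≥0 → ℝ} {r : ℝ} {a : ℝ≥0}
    (hf : ContinuousWithinAt f (Set.Ici a) a) (ha : entryTime f r = a) : r ≤ f a := by
  by_contra! h
  obtain ⟨u, hau, hu⟩ := mem_nhdsGE_iff_exists_Ico_subset.mp (hf.eventually_lt_const h)
  have hu_le : (u : ℝ≥0∞) ≤ entryTime f r := by
    refine le_sInf ?_
    rintro _ ⟨s, rfl, hs⟩
    have has : (a : ℝ≥0∞) ≤ s := ha ▸ sInf_le ⟨s, rfl, hs⟩
    by_contra! hsu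
    exact (hu ⟨by exact_mod_cast has, by exact_mod_cast hsu⟩ : f s < r).not_ge hs
  rw [ha] at hu_le
  exact (ENNReal.coe_lt_coe.mpr hau).not_ge hu_le

def IsTruncatedEntrySeq (f : ℝ≥0 → ℝ) (T : ℕ → ℝ≥0) : Prop :=
  ∀ n : ℕ, (T n : ℝ≥0∞) = min (n : ℝ≥0∞) (entryTime f n)

namespace IsTruncatedEntrySeq

variable {f : ℝ≥0 → ℝ} {T : ℕ → ℝ≥0}

lemma le_nat (hT : IsTruncatedEntrySeq f T) (n : ℕ) : T n ≤ n := by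
  have h : (T n : ℝ≥0∞) ≤ n := (hT n).trans_le (min_le_left _ _)
  exact_mod_cast h

lemma monotone (hT : IsTruncatedEntrySeq f T) : Monotone T := by
  intro n k hnk
  have h : (T n : ℝ≥0∞) ≤ T k := by
    rw [hT n, hT k]
    exact min_le_min (by exact_mod_cast hnk) (entryTime_mono f (by exact_mod_cast hnk))
  exact_mod_cast h

lemma nat_le_apply (hT : IsTruncatedEntrySeq f T) {n : ℕ}
    (hf : ContinuousWithinAt f (Set.Ici (T n)) (T n)) (hn : T n < n) : (n : ℝ) ≤ f (T n) := by
  refine le_apply_of_entryTime_eq hf ?_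
  have hn' : (T n : ℝ≥0∞) < n := by exact_mod_cast hn
  rw [hT n] at hn' ⊢
  exact (min_eq_right (min_lt_iff.mp hn' |>.resolve_left (lt_irrefl _)).le).symm

lemma lt_iSup (hT : IsTruncatedEntrySeq f T) (hf : ∀ t, ContinuousWithinAt f (Set.Ici t) t)
    (n : ℕ) : (T n : ℝ≥0∞) < ⨆ k, (T k : ℝ≥0∞) := by
  by_contra! hsup
  have hstuck : ∀ k, n ≤ k → T k = T n := fun k hk =>
    le_antisymm (by exact_mod_cast (le_iSup (fun k => (T k : ℝ≥0∞)) k).trans hsup)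
      (hT.monotone hk)
  obtain ⟨k, hk⟩ := exists_nat_gt (max (n : ℝ) (f (T n)))
  have hnk : n < k := by exact_mod_cast (le_max_left _ _).trans_lt hk
  have hlt : T k < k := by
    rw [hstuck k hnk.le]
    exact (hT.le_nat n).trans_lt (by exact_mod_cast hnk)
  have := hT.nat_le_apply (hf _) hlt
  rw [hstuck k hnk.le] at this
  linarith [le_max_right (n : ℝ) (f (T n))]

end IsTruncatedEntrySeq

lemma exists_dyadic_mem_Ioo {s u : ℝ≥0} (h : s < u) (r₀ : ℕ) :
    ∃ r ≥ r₀, ∃ i : ℕ, s < (i : ℝ≥0) / 2 ^ r ∧ (i : ℝ≥0) / 2 ^ r < u := by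
  obtain ⟨r₁, hr₁⟩ := exists_pow_lt_of_lt_one (tsub_pos_of_lt h) (by norm_num : (2⁻¹ : ℝ≥0) < 1)
  set r := max r₀ r₁
  have hpow : (2⁻¹ : ℝ≥0) ^ r < u - s :=
    (pow_le_pow_of_le_one (by norm_num) (by norm_num) (le_max_right _ _)).trans_lt hr₁
  have h2r : (0 : ℝ≥0) < 2 ^ r := by positivity
  refine ⟨r, le_max_left _ _, ⌊s * 2 ^ r⌋₊ + 1, ?_, ?_⟩
  · rw [lt_div_iff₀ h2r]
    exact_mod_cast Nat.lt_floor_add_one _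
  · rw [div_lt_iff₀ h2r]
    calc ((⌊s * 2 ^ r⌋₊ + 1 : ℕ) : ℝ≥0) ≤ s * 2 ^ r + 1 := by
          push_cast; gcongr; exact Nat.floor_le (by positivity)
      _ < s * 2 ^ r + (u - s) * 2 ^ r := by
          gcongr
          rwa [inv_pow, inv_lt_iff_one_lt_mul₀ h2r] at hpow
      _ = u * 2 ^ r := by rw [← add_mul, add_tsub_cancel_of_le h.le]

lemma div_two_pow_le_of_le_mul {i m r : ℕ} (h : i ≤ m * 2 ^ r) : (i : ℝ≥0) / 2 ^ r ≤ m :=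
  (div_le_iff₀ (by positivity)).mpr (by exact_mod_cast h)

/-- Raising the dyadic level `r` also raises the localization index `m + r`, so that these
events increase with `r`. -/
def DyadicDip (f : ℝ≥0 → ℝ) (T : ℕ → ℝ≥0) (c : ℝ) (m n r : ℕ) : Prop :=
  ∃ i ≤ m * 2 ^ r, T n < (i : ℝ≥0) / 2 ^ r ∧ (i : ℝ≥0) / 2 ^ r < T (m + r) ∧
    f ((i : ℝ≥0) / 2 ^ r) < c

namespace DyadicDip

variable {f : ℝ≥0 → ℝ} {T : ℕ → ℝ≥0} {c : ℝ} {m n r : ℕ}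

lemma le_nat (h : DyadicDip f T c m n r) : T n ≤ m := by
  obtain ⟨i, him, hni, -, -⟩ := h
  exact hni.le.trans (div_two_pow_le_of_le_mul him)

lemma succ (hT : Monotone T) (h : DyadicDip f T c m n r) : DyadicDip f T c m n (r + 1) := by
  obtain ⟨i, him, hni, hiT, hfi⟩ := h
  have hq : ((2 * i : ℕ) : ℝ≥0) / 2 ^ (r + 1) = (i : ℝ≥0) / 2 ^ r := by
    rw [pow_succ, Nat.cast_mul, Nat.cast_ofNat, mul_comm (2 ^ r : ℝ≥0),
      mul_div_mul_left _ _ two_ne_zero]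
  refine ⟨2 * i, by rw [pow_succ]; linarith, ?_⟩
  rw [hq]
  exact ⟨hni, hiT.trans_le (hT (by omega)), hfi⟩

end DyadicDip

lemma exists_dyadicDip {f : ℝ≥0 → ℝ} {T : ℕ → ℝ≥0} {c : ℝ} {m : ℕ} {x : ℝ≥0}
    (hf : ∀ t, ContinuousWithinAt f (Set.Ici t) t) (hT : Monotone T)
    (hx : (x : ℝ≥0∞) = ⨆ k, (T k : ℝ≥0∞)) (hTx : ∀ n, T n < x) (hxm : x ≤ m)
    (hfreq : ∃ᶠ s in 𝓝[<] x, f s < c) (n : ℕ) : ∃ r, DyadicDip f T c m n r := by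
  obtain ⟨s, hfs, hns, hsx⟩ :=
    (hfreq.and_eventually (Ioo_mem_nhdsLT (hTx n))).exists
  obtain ⟨k, hsk⟩ : ∃ k, s < T k := by
    have : (s : ℝ≥0∞) < ⨆ k, (T k : ℝ≥0∞) := hx ▸ ENNReal.coe_lt_coe.mpr hsx
    obtain ⟨k, hk⟩ := lt_iSup_iff.mp this
    exact ⟨k, by exact_mod_cast hk⟩
  obtain ⟨u, hsu, hu⟩ := mem_nhdsGE_iff_exists_Ico_subset.mp ((hf s).eventually_lt_const hfs)
  obtain ⟨r, hkr, i, hsi, hiu⟩ := exists_dyadic_mem_Ioo (lt_min hsu hsk) k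
  have hiTk : (i : ℝ≥0) / 2 ^ r < T k := hiu.trans_le (min_le_right _ _)
  have hTkx : T k ≤ x := by
    have : (T k : ℝ≥0∞) ≤ x := hx ▸ le_iSup (fun k => (T k : ℝ≥0∞)) k
    exact_mod_cast this
  refine ⟨r, i, ?_, hns.trans hsi, hiTk.trans_le (hT (by omega)),
    hu ⟨hsi.le, hiu.trans_le (min_le_left _ _)⟩⟩
  have : (i : ℝ≥0) < m * 2 ^ r := (div_lt_iff₀ (by positivity)).mp (hiTk.trans_le (hTkx.trans hxm))
  exact_mod_cast this.le

lemma MeasureTheory.IsStoppingTime.measurableSet_of_subset_setOf_le {Ω ι : Type*}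
    {m0 : MeasurableSpace Ω} [LinearOrder ι] {𝓕 : Filtration ι m0} {τ : Ω → WithTop ι}
    (hτ : IsStoppingTime 𝓕 τ) {i : ι} {s : Set Ω} (hs : MeasurableSet[𝓕 i] s)
    (hsτ : s ⊆ {ω | i ≤ τ ω}) : MeasurableSet[hτ.measurableSpace] s := by
  refine ⟨le_iSup (fun t => 𝓕 t) i s hs, fun t => ?_⟩
  rcases le_or_gt i t with hit | hti
  · exact (𝓕.mono hit s hs).inter (hτ t)
  · convert @MeasurableSet.empty _ (𝓕 t)
    refine Set.eq_empty_of_forall_notMem fun ω ⟨hωs, hωt⟩ => ?_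
    have : (i : WithTop ι) ≤ t := (hsτ hωs).trans hωt
    exact hti.not_ge (WithTop.coe_le_coe.mp this)

lemma MeasureTheory.Martingale.setIntegral_biUnion_le {Ω ι : Type*} {m0 : MeasurableSpace Ω}
    [LinearOrder ι] {μ : Measure Ω} [IsFiniteMeasure μ] {𝓕 : Filtration ι m0}
    {Y : ι → Ω → ℝ} (hY : Martingale Y 𝓕 μ) {q : ℕ → ι} (hq : Monotone q)
    {B : ℕ → Set Ω} (hB : ∀ i, MeasurableSet[𝓕 (q i)] (B i)) {c : ℝ}
    (hc : ∀ i, ∀ ω ∈ B i, Y (q i) ω ≤ c) {L : ℕ} {t : ι} (hqt : ∀ i ≤ L, q i ≤ t) :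
    ∫ ω in ⋃ i ∈ Finset.range (L + 1), B i, Y t ω ∂μ
      ≤ c * μ.real (⋃ i ∈ Finset.range (L + 1), B i) := by
  have hD : ∀ i, MeasurableSet[𝓕 (q i)] (disjointed B i) := fun i => by
    rw [disjointed_eq_inter_compl]
    exact (hB i).inter (.iInter fun j => .iInter fun hji => (𝓕.mono (hq hji.le) _ (hB j)).compl)
  have hdisj : Set.PairwiseDisjoint ↑(Finset.range (L + 1)) (disjointed B) :=
    (disjoint_disjointed B).set_pairwise _
  have hunion : ⋃ i ∈ Finset.range (L + 1), B i = ⋃ i ∈ Finset.range (L + 1), disjointed B i := by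
    rw [biUnion_range_succ_disjointed, partialSups_eq_biUnion_range]
  rw [hunion, integral_biUnion_finset _ (fun i _ => 𝓕.le _ _ (hD i)) hdisj
      (fun i _ => (hY.integrable t).integrableOn),
    measureReal_biUnion_finset hdisj (fun i _ => 𝓕.le _ _ (hD i)) (fun _ _ => measure_ne_top _ _),
    Finset.mul_sum]
  refine Finset.sum_le_sum fun i hi => ?_
  rw [← hY.setIntegral_eq (hqt i (Finset.mem_range_succ_iff.mp hi)) (hD i)]
  calc ∫ ω in disjointed B i, Y (q i) ω ∂μ ≤ ∫ _ in disjointed B i, c ∂μ :=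
        setIntegral_mono_on (hY.integrable _).integrableOn (integrable_const c).integrableOn
          (𝓕.le _ _ (hD i)) fun ω hω => hc i ω (disjointed_subset B i hω)
    _ = c * μ.real (disjointed B i) := by rw [setIntegral_const, smul_eq_mul, mul_comm]

lemma stoppedProcess_coe_apply {Ω ι β : Type*} [LinearOrder ι] [Nonempty ι] (u : ι → Ω → β)
    (T : Ω → ι) (t : ι) (ω : Ω) :
    stoppedProcess u (fun ω => (T ω : WithTop ι)) t ω = u (min t (T ω)) ω := by
  simp only [stoppedProcess, ← WithTop.coe_min]
  rfl

section FollmerMeasure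

variable {Ω : Type*} {m0 : MeasurableSpace Ω} {P Q0 : Measure Ω} {𝓖 : Filtration ℝ≥0 m0}
  {N : ℝ≥0 → Ω → ℝ} {τn : ℕ → Ω → ℝ≥0}

lemma measure_setOf_le_le_inv [IsProbabilityMeasure P] (hNpos : ∀ t ω, 0 < N t ω)
    (hN0 : ∀ ω, N 0 ω = 1) (hNrc : ∀ ω t, ContinuousWithinAt (fun s => N s ω) (Set.Ici t) t)
    (hτn : ∀ ω, IsTruncatedEntrySeq (N · ω) (τn · ω)) {n : ℕ}
    (hmart : Martingale (stoppedProcess N (fun ω => (τn n ω : WithTop ℝ≥0))) 𝓖 P)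
    {m : ℕ} (hmn : m < n) : P {ω | τn n ω ≤ m} ≤ (n : ℝ≥0∞)⁻¹ := by
  set X := stoppedProcess N (fun ω => (τn n ω : WithTop ℝ≥0)) with hX
  have hXn : ∀ ω, X n ω = N (τn n ω) ω := fun ω => by
    rw [hX, stoppedProcess_coe_apply, min_eq_right ((hτn ω).le_nat n)]
  have hint : ∫ ω, X n ω ∂P = 1 := by
    have h0n := hmart.setIntegral_eq (zero_le : (0 : ℝ≥0) ≤ n) MeasurableSet.univ
    rw [setIntegral_univ, setIntegral_univ] at h0n
    have hX0 : ∀ ω, X 0 ω = 1 := fun ω => by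
      rw [hX, stoppedProcess_coe_apply, min_eq_left zero_le, hN0]
    simp [← h0n, hX0]
  have hsub : {ω | τn n ω ≤ m} ⊆ {ω | (n : ℝ) ≤ X n ω} := fun ω hω => by
    rw [Set.mem_ofPred_eq, hXn]
    refine (hτn ω).nat_le_apply (hNrc ω _) (lt_of_le_of_lt hω ?_)
    exact_mod_cast hmn
  have hmarkov := mul_meas_ge_le_integral_of_nonneg
    (Eventually.of_forall fun ω => by rw [hXn]; exact (hNpos _ ω).le) (hmart.integrable n) n
  have hn : (0 : ℝ) < n := by exact_mod_cast (Nat.zero_le m).trans_lt hmn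
  rw [hint] at hmarkov
  calc P {ω | τn n ω ≤ m} ≤ P {ω | (n : ℝ) ≤ X n ω} := measure_mono hsub
    _ = ENNReal.ofReal (P.real {ω | (n : ℝ) ≤ X n ω}) :=
        (ofReal_measureReal (measure_ne_top _ _)).symm
    _ ≤ ENNReal.ofReal (n : ℝ)⁻¹ := by
        refine ENNReal.ofReal_le_ofReal ?_
        rwa [← one_div, le_div_iff₀ hn, mul_comm]
    _ = (n : ℝ≥0∞)⁻¹ := by rw [ENNReal.ofReal_inv_of_pos hn, ENNReal.ofReal_natCast]

lemma setOf_dyadicDip_eq_biUnion (c : ℝ) (m n r : ℕ) :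
    {ω | DyadicDip (N · ω) (τn · ω) c m n r} = ⋃ i ∈ Finset.range (m * 2 ^ r + 1),
      {ω | τn n ω < (i : ℝ≥0) / 2 ^ r ∧ (i : ℝ≥0) / 2 ^ r < τn (m + r) ω ∧
        stoppedProcess N (fun ω => (τn (m + r) ω : WithTop ℝ≥0)) ((i : ℝ≥0) / 2 ^ r) ω < c} := by
  ext ω
  simp only [DyadicDip, Set.mem_ofPred_eq, Set.mem_iUnion, Finset.mem_range_succ_iff, exists_prop]
  refine exists_congr fun i => and_congr_right fun _ => and_congr_right fun _ => and_congr_right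
    fun h => ?_
  rw [stoppedProcess_coe_apply, min_eq_left h.le]

lemma measure_setOf_dyadicDip_le [IsFiniteMeasure P] [IsFiniteMeasure Q0]
    (hτn_le : ∀ k ω, τn k ω ≤ k) (hst : ∀ k, IsStoppingTime 𝓖 (fun ω => (τn k ω : WithTop ℝ≥0)))
    (hmart : ∀ k, Martingale (stoppedProcess N (fun ω => (τn k ω : WithTop ℝ≥0))) 𝓖 P)
    (hQ0 : ∀ k, ∀ s : Set Ω, MeasurableSet[(hst k).measurableSpace] s →
      (Q0 s).toReal = ∫ ω in s, stoppedValue N (fun ω => (τn k ω : WithTop ℝ≥0)) ω ∂P)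
    (c : ℝ≥0) (m n r : ℕ) :
    Q0 {ω | DyadicDip (N · ω) (τn · ω) c m n r} ≤ c * P {ω | τn n ω ≤ m} := by
  set K := m + r
  set X := stoppedProcess N (fun ω => (τn K ω : WithTop ℝ≥0)) with hX
  set q : ℕ → ℝ≥0 := fun i => (i : ℝ≥0) / 2 ^ r
  set B : ℕ → Set Ω := fun i => {ω | τn n ω < q i ∧ q i < τn K ω ∧ X (q i) ω < c}
  have hA := setOf_dyadicDip_eq_biUnion (N := N) (τn := τn) c m n r
  have hq : Monotone q := fun i j hij => by simp only [q]; gcongr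
  have hB : ∀ i, MeasurableSet[𝓖 (q i)] (B i) := fun i => by
    refine .inter ?_ (.inter ?_ ?_)
    · have h := (hst n).measurableSet_lt (q i)
      simp only [WithTop.coe_lt_coe] at h
      exact h
    · have h := (hst K).measurableSet_gt (q i)
      simp only [WithTop.coe_lt_coe] at h
      exact h
    · exact measurableSet_lt ((hmart K).1 (q i)).measurable measurable_const
  have hAmeas : MeasurableSet[(hst K).measurableSpace]
      {ω | DyadicDip (N · ω) (τn · ω) c m n r} := by
    rw [hA]
    exact Finset.measurableSet_biUnion _ fun i _ => (hst K).measurableSet_of_subset_setOf_le (hB i)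
      fun ω hω => WithTop.coe_le_coe.mpr hω.2.1.le
  have hsv : stoppedValue N (fun ω => (τn K ω : WithTop ℝ≥0)) = X K := funext fun ω => by
    rw [hX, stoppedProcess_coe_apply, min_eq_right (hτn_le K ω)]
    rfl
  have hint := (hmart K).setIntegral_biUnion_le hq hB (fun i ω hω => hω.2.2.le)
    (L := m * 2 ^ r) (t := K) fun i hi =>
      (div_two_pow_le_of_le_mul hi).trans (by exact_mod_cast Nat.le_add_right m r)
  rw [← hA, ← hX, ← hsv, ← hQ0 K _ hAmeas] at hint
  have hsub : {ω | DyadicDip (N · ω) (τn · ω) c m n r} ⊆ {ω | τn n ω ≤ m} :=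
    Set.ofPred_subset_ofPred.mpr fun _ h => h.le_nat
  rw [← ENNReal.ofReal_toReal (measure_ne_top Q0 _)]
  refine (ENNReal.ofReal_le_ofReal
    (hint.trans (mul_le_mul_of_nonneg_left (measureReal_mono hsub) c.coe_nonneg))).trans_eq ?_
  rw [ENNReal.ofReal_mul c.coe_nonneg, ofReal_measureReal (measure_ne_top _ _),
    ENNReal.ofReal_coe_nnreal]

lemma measure_iInter_iUnion_dyadicDip_eq_zero [IsProbabilityMeasure P] [IsFiniteMeasure Q0]
    (hNpos : ∀ t ω, 0 < N t ω) (hN0 : ∀ ω, N 0 ω = 1)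
    (hNrc : ∀ ω t, ContinuousWithinAt (fun s => N s ω) (Set.Ici t) t)
    (hτn : ∀ ω, IsTruncatedEntrySeq (N · ω) (τn · ω))
    (hst : ∀ k, IsStoppingTime 𝓖 (fun ω => (τn k ω : WithTop ℝ≥0)))
    (hmart : ∀ k, Martingale (stoppedProcess N (fun ω => (τn k ω : WithTop ℝ≥0))) 𝓖 P)
    (hQ0 : ∀ k, ∀ s : Set Ω, MeasurableSet[(hst k).measurableSpace] s →
      (Q0 s).toReal = ∫ ω in s, stoppedValue N (fun ω => (τn k ω : WithTop ℝ≥0)) ω ∂P)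
    (c : ℝ≥0) (m : ℕ) :
    Q0 (⋂ n, ⋃ r, {ω | DyadicDip (N · ω) (τn · ω) c m n r}) = 0 := by
  have hbound : ∀ n : ℕ, m < n →
      Q0 (⋂ n, ⋃ r, {ω | DyadicDip (N · ω) (τn · ω) c m n r}) ≤ c * (n : ℝ≥0∞)⁻¹ := by
    intro n hmn
    have hmono : Monotone fun r => {ω | DyadicDip (N · ω) (τn · ω) c m n r} :=
      monotone_nat_of_le_succ fun r =>
        Set.ofPred_subset_ofPred.mpr fun ω h => h.succ (hτn ω).monotone
    calc Q0 (⋂ n, ⋃ r, {ω | DyadicDip (N · ω) (τn · ω) c m n r})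
        ≤ Q0 (⋃ r, {ω | DyadicDip (N · ω) (τn · ω) c m n r}) :=
          measure_mono (Set.iInter_subset _ n)
      _ = ⨆ r, Q0 {ω | DyadicDip (N · ω) (τn · ω) c m n r} := hmono.measure_iUnion
      _ ≤ c * P {ω | τn n ω ≤ m} := iSup_le fun r =>
          measure_setOf_dyadicDip_le (fun k ω => (hτn ω).le_nat k) hst hmart hQ0 c m n r
      _ ≤ c * (n : ℝ≥0∞)⁻¹ := by
          gcongr
          exact measure_setOf_le_le_inv hNpos hN0 hNrc hτn (hmart n) hmn
  have hlim : Tendsto (fun n : ℕ => (c : ℝ≥0∞) * (n : ℝ≥0∞)⁻¹) atTop (𝓝 0) := by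
    simpa using ENNReal.Tendsto.const_mul ENNReal.tendsto_inv_nat_nhds_zero
      (Or.inr ENNReal.coe_ne_top)
  exact le_antisymm (ge_of_tendsto hlim (eventually_atTop.mpr ⟨m + 1, hbound⟩)) zero_le

end FollmerMeasure

/-- Lemma 2.2: under the Föllmer measure `Q₀` of a strictly positive local martingale `N`
(with localizing sequence `τ_n = n ∧ inf{t : N_t ≥ n}` and explosion time `τ = lim τ_n`),
one has `τ_n < τ` `Q₀`-a.s. for every `n`, and on `{τ < ∞}` the left limit of `N` at `τ`
is `+∞` `Q₀`-a.s.: `N` explodes continuously and does not jump to infinity. -/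
theorem follmer_explodes_continuously
    {Ω : Type*} {m0 : MeasurableSpace Ω} (P Q0 : Measure Ω)
    [IsProbabilityMeasure P] [IsProbabilityMeasure Q0]
    (𝓖 : Filtration ℝ≥0 m0)
    (N : ℝ≥0 → Ω → ℝ)
    (τn : ℕ → Ω → ℝ≥0) (τ : Ω → ℝ≥0∞)
    (hNpos : ∀ t ω, 0 < N t ω)
    (hN0 : ∀ ω, N 0 ω = 1)
    -- càdlàg paths (right-continuity is what is used):
    (hNrc : ∀ ω t, ContinuousWithinAt (fun s => N s ω) (Set.Ici t) t)
    -- `τ_n = n ∧ inf{t ≥ 0 : N_t ≥ n}`: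
    (hτn : ∀ n ω, (τn n ω : ℝ≥0∞)
      = min (n : ℝ≥0∞) (sInf {t : ℝ≥0∞ | ∃ s : ℝ≥0, t = (s : ℝ≥0∞) ∧ (n : ℝ) ≤ N s ω}))
    (hst : ∀ n, IsStoppingTime 𝓖 (fun ω => (τn n ω : WithTop ℝ≥0)))
    -- `τ = lim_n τ_n`:
    (hτ : ∀ ω, τ ω = ⨆ n, (τn n ω : ℝ≥0∞))
    -- `N` is a `P`-local martingale: each stopped process `N^{τ_n}` is a `P`-martingale:
    (hlocmart : ∀ n, Martingale (stoppedProcess N (fun ω => (τn n ω : WithTop ℝ≥0))) 𝓖 P)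
    -- `Q₀` agrees with `N_{τ_n} dP` on the σ-field `𝓖_{τ_n}`, for each `n`:
    (hQ0 : ∀ n, ∀ s : Set Ω, MeasurableSet[(hst n).measurableSpace] s →
      (Q0 s).toReal = ∫ ω in s, stoppedValue N (fun ω => (τn n ω : WithTop ℝ≥0)) ω ∂P) :
    (∀ n, Q0 {ω | ¬ ((τn n ω : ℝ≥0∞) < τ ω)} = 0)
      ∧ (∀ᵐ ω ∂Q0, τ ω < ∞ →
          Tendsto (fun s : ℝ≥0 => N s ω) (𝓝[<] (τ ω).toNNReal) atTop) := by
  have hseq : ∀ ω, IsTruncatedEntrySeq (N · ω) (τn · ω) := fun ω n => hτn n ω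
  have hlt : ∀ n ω, (τn n ω : ℝ≥0∞) < τ ω := fun n ω => hτ ω ▸ (hseq ω).lt_iSup (hNrc ω) n
  refine ⟨fun n => by simp [hlt n], ?_⟩
  rw [ae_iff]
  refine measure_mono_null ?_ (measure_iUnion_null fun c : ℕ => measure_iUnion_null fun m : ℕ =>
    measure_iInter_iUnion_dyadicDip_eq_zero hNpos hN0 hNrc hseq hst hlocmart hQ0 c m)
  intro ω hω
  obtain ⟨hfin, hnt⟩ := Classical.not_imp.mp hω
  obtain ⟨m, hm⟩ := ENNReal.exists_nat_gt hfin.ne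
  obtain ⟨b, hb⟩ : ∃ b : ℝ, ∃ᶠ s in 𝓝[<] (τ ω).toNNReal, N s ω < b := by
    simpa [tendsto_atTop, not_eventually] using hnt
  obtain ⟨c, hc⟩ := exists_nat_ge b
  have hx : ((τ ω).toNNReal : ℝ≥0∞) = ⨆ k, (τn k ω : ℝ≥0∞) :=
    (ENNReal.coe_toNNReal hfin.ne).trans (hτ ω)
  simp only [Set.mem_iUnion, Set.mem_iInter]
  refine ⟨c, m, exists_dyadicDip (hNrc ω) (hseq ω).monotone hx (fun k => ?_) ?_
    (hb.mono fun s hs => ?_)⟩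
  · rw [← ENNReal.coe_lt_coe, ENNReal.coe_toNNReal hfin.ne]
    exact hlt k ω
  · rw [← ENNReal.coe_le_coe, ENNReal.coe_toNNReal hfin.ne]
    exact_mod_cast hm.le
  · rw [NNReal.coe_natCast]
    exact hs.trans_le hc
end

section
/- Let $M$ be a nonnegative right-continuous martingale under $Q$ that is constant after a stopping time $\zeta$, and let $\tau = \lim_n \tau_n$ where $\tau_n = n \wedge \inf\{t : M_t \leq 1/n\}$. Then $\tau \leq \zeta$ holds $Q$-almost surely on $\{\tau < \infty\}$; equivalently, $Q(\zeta < \tau < \infty) = 0$. -/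
/-!
Constancy after `ζ` holds a.s. at countably many times, hence, by right-continuity, a.s. at all
times simultaneously. On such a path, `ζ < τ_n` means that the level `1/n` is not reached by
time `ζ`, hence never, since the path is frozen at `M_ζ > 1/n` afterwards. Then no lower level
`1/m`, `m ≥ n`, is reached either, so `τ_m = m` and `τ = ∞`.
-/

open MeasureTheory Set
open scoped ENNReal

section RightContinuous

variable {ι X : Type*} [TopologicalSpace ι] [LinearOrder ι] [OrderTopology ι] [DenselyOrdered ι]
  [TopologicalSpace X] [T1Space X]

theorem eq_of_continuousWithinAt_Ici_of_eq_on_dense {f : ι → X} {D : Set ι} (hD : Dense D)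
    {t : ι} (ht : ¬IsMax t) (hf : ContinuousWithinAt f (Ici t) t) {c : X}
    (hc : ∀ s ∈ D, t < s → f s = c) : f t = c := by
  have hmem : t ∈ closure (Ioi t ∩ D) := by
    have : t ∈ closure (Ioi t) := by
      rw [closure_Ioi' (not_isMax_iff.1 ht)]
      exact self_mem_Ici
    exact closure_minimal (hD.open_subset_closure_inter isOpen_Ioi) isClosed_closure this
  have hmaps : MapsTo f (Ioi t ∩ D) {c} := fun s hs => hc s hs.2 hs.1
  simpa [closure_singleton] using
    (hf.mono Ioi_subset_Ici_self |>.mono inter_subset_left).mem_closure hmem hmaps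

variable [TopologicalSpace.SeparableSpace ι] {Ω : Type*} {m0 : MeasurableSpace Ω} {Q : Measure Ω}

theorem ae_forall_eq_min_of_continuousWithinAt {M : ι → Ω → X} {ζ : Ω → ι}
    (hrc : ∀ ω t, ¬IsMax t → ContinuousWithinAt (fun s => M s ω) (Ici t) t)
    (hconst : ∀ t, ∀ᵐ ω ∂Q, M t ω = M (min t (ζ ω)) ω) :
    ∀ᵐ ω ∂Q, ∀ t, M t ω = M (min t (ζ ω)) ω := by
  obtain ⟨D, hD_count, hD⟩ := TopologicalSpace.exists_countable_dense ι
  have hcount : (D ∪ {t | IsMax t}).Countable :=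
    hD_count.union <| Set.Subsingleton.countable fun x hx y hy =>
      (le_total x y).elim hx.eq_of_le fun h => (hy.eq_of_le h).symm
  filter_upwards [(ae_ball_iff hcount).2 fun t _ => hconst t] with ω hω t
  by_cases hmax : IsMax t
  · exact hω t (Or.inr hmax)
  rcases le_total t (ζ ω) with hle | hlt
  · rw [min_eq_left hle]
  rw [min_eq_right hlt]
  refine eq_of_continuousWithinAt_Ici_of_eq_on_dense hD hmax (hrc ω t hmax) fun s hs hts => ?_
  rw [hω s (Or.inl hs), min_eq_right (hlt.trans hts.le)]

end RightContinuous

theorem lt_of_lt_sInf_setOf_le {ι β : Type*} [CompleteLinearOrder ι] [LinearOrder β]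
    {f : ι → β} {a : ι} {c : β} (hf : ∀ t, f t = f (min t a)) (ha : a < sInf {t | f t ≤ c})
    (t : ι) : c < f t := by
  by_contra! h
  have hmin : min t a ∈ {t | f t ≤ c} := by
    change f (min t a) ≤ c
    rwa [← hf]
  exact ha.not_ge ((sInf_le hmin).trans (min_le_right t a))

theorem iSup_min_natCast_sInf_eq_top {f : ℝ≥0∞ → ℝ} {a : ℝ≥0∞} (hf : ∀ t, f t = f (min t a))
    (ha : a < ⨆ n : ℕ, min (n : ℝ≥0∞) (sInf {t | f t ≤ 1 / (n : ℝ)})) :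
    ⨆ n : ℕ, min (n : ℝ≥0∞) (sInf {t | f t ≤ 1 / (n : ℝ)}) = ⊤ := by
  obtain ⟨n, hn⟩ := lt_iSup_iff.1 ha
  have hn0 : (0 : ℝ) < n := by
    rcases Nat.eq_zero_or_pos n with rfl | h
    · simp at hn
    · exact_mod_cast h
  have habove : ∀ t, 1 / (n : ℝ) < f t := lt_of_lt_sInf_setOf_le hf (hn.trans_le (min_le_right _ _))
  have hnever : ∀ m : ℕ, sInf {t | f t ≤ 1 / ((m + n : ℕ) : ℝ)} = ⊤ := fun m =>
    sInf_eq_top.2 fun t ht => absurd ht <| not_le.2 <|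
      (one_div_le_one_div_of_le hn0 (by exact_mod_cast Nat.le_add_left n m)).trans_lt (habove t)
  refine top_unique (ENNReal.iSup_natCast ▸ iSup_le fun m => ?_)
  refine le_iSup_of_le (m + n) ?_
  rw [hnever, min_top_right]
  exact_mod_cast Nat.le_add_right m n

theorem hitting_time_before_absorption_general
    {Ω : Type*} {m0 : MeasurableSpace Ω} (Q : Measure Ω)
    (M : ℝ≥0∞ → Ω → ℝ)
    -- right-continuous paths (at finite times):
    (hMrc : ∀ ω, ∀ t : ℝ≥0∞, t ≠ ⊤ → ContinuousWithinAt (fun s => M s ω) (Set.Ici t) t)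
    (ζ : Ω → ℝ≥0∞)
    -- `M` is constant after `ζ`:
    (hconst : ∀ t : ℝ≥0∞, ∀ᵐ ω ∂Q, M t ω = M (min t (ζ ω)) ω)
    (τn : ℕ → Ω → ℝ≥0∞) (τ : Ω → ℝ≥0∞)
    -- `τ_n = n ∧ inf{t : M_t ≤ 1/n}` and `τ = lim_n τ_n`:
    (hτn : ∀ n ω, τn n ω = min (n : ℝ≥0∞) (sInf {t : ℝ≥0∞ | M t ω ≤ 1 / (n : ℝ)}))
    (hτ : ∀ ω, τ ω = ⨆ n, τn n ω) :
    Q {ω | ζ ω < τ ω ∧ τ ω < ⊤} = 0 := by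
  have hpaths : ∀ᵐ ω ∂Q, ∀ t, M t ω = M (min t (ζ ω)) ω :=
    ae_forall_eq_min_of_continuousWithinAt
      (fun ω t ht => hMrc ω t (not_isMax_iff_ne_top.1 ht)) hconst
  have hτ_top : ∀ᵐ ω ∂Q, ζ ω < τ ω → τ ω = ⊤ := hpaths.mono fun ω hω hζτ => by
    simp only [hτ, hτn] at hζτ ⊢
    exact iSup_min_natCast_sInf_eq_top hω hζτ
  refine measure_mono_null ?_ (ae_iff.1 hτ_top)
  exact fun ω hω hζτ => hω.2.ne (hζτ hω.1)

/-- Proposition 4.6(i): if `M` is a nonnegative right-continuous `Q`-martingale that is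
constant after a (stopping) time `ζ`, and `τ = lim_n τ_n` with
`τ_n = n ∧ inf{t : M_t ≤ 1/n}`, then `τ ≤ ζ` `Q`-a.s. on `{τ < ∞}`, i.e.
`Q(ζ < τ < ∞) = 0`. -/
theorem hitting_time_before_absorption
    {Ω : Type*} {m0 : MeasurableSpace Ω} (Q : Measure Ω) [IsProbabilityMeasure Q]
    (𝓖 : Filtration ℝ≥0∞ m0)
    (M : ℝ≥0∞ → Ω → ℝ)
    (hMnonneg : ∀ t ω, 0 ≤ M t ω)
    (hM : Martingale M 𝓖 Q)
    -- right-continuous paths (at finite times):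
    (hMrc : ∀ ω, ∀ t : ℝ≥0∞, t ≠ ⊤ → ContinuousWithinAt (fun s => M s ω) (Set.Ici t) t)
    (ζ : Ω → ℝ≥0∞) (hζ : IsStoppingTime 𝓖 (fun ω => ((ζ ω : ℝ≥0∞) : WithTop ℝ≥0∞)))
    -- `M` is constant after `ζ`:
    (hconst : ∀ t : ℝ≥0∞, ∀ᵐ ω ∂Q, M t ω = M (min t (ζ ω)) ω)
    (τn : ℕ → Ω → ℝ≥0∞) (τ : Ω → ℝ≥0∞)
    -- `τ_n = n ∧ inf{t : M_t ≤ 1/n}` and `τ = lim_n τ_n`: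
    (hτn : ∀ n ω, τn n ω = min (n : ℝ≥0∞) (sInf {t : ℝ≥0∞ | M t ω ≤ 1 / (n : ℝ)}))
    (hτ : ∀ ω, τ ω = ⨆ n, τn n ω) :
    Q {ω | ζ ω < τ ω ∧ τ ω < ⊤} = 0 :=
  hitting_time_before_absorption_general (m0 := m0) Q M hMrc ζ hconst τn τ hτn hτ
end

section
/- Let $\tau$ be a random time on a probability space $(\Omega, \mathcal G, Q)$, $\mathbb F$ a right-continuous filtration, and $\mathbb F^\tau$ the progressive expansion (smallest filtration containing $\mathbb F$, satisfying the usual conditions under $Q$, and making $\tau$ a stopping time). Suppose that for every $\mathbb F^\tau$-stopping time $\rho$ with $\rho < \tau$ a.s.\ there exists an $\mathbb F$-stopping time $\sigma$ with $\sigma \wedge \tau = \rho \wedge \tau$. If $\tau$ is $\mathbb F^\tau$-predictable (announced by a strictly increasing sequence of $\mathbb F^\tau$-stopping times $\rho_n \uparrow \tau$ with $\rho_n < \tau$), then $\tau$ is $Q$-a.s.\ equal to an $\mathbb F$-stopping time, and consequently $Q(\tau > t \mid \mathcal F_t) = \mathbf 1_{\{\tau > t\}}$ $Q$-a.s.\ for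 every $t$. -/
/-!
Transfer the announcing sequence: each `ρ n < τ` agrees before `τ` with an `𝓕`-stopping time
`σ n`, and since `ρ n` lies strictly before `τ` this forces `σ n = ρ n` a.s. Hence
`τ = ⨆ n, ρ n = ⨆ n, σ n` a.s., and a countable supremum of `𝓕`-stopping times is an
`𝓕`-stopping time. The event `{t < τ}` is then a.s. equal to an `𝓕 t`-measurable event, so
conditioning on `𝓕 t` leaves its indicator unchanged.
-/

open MeasureTheory Filter Topology
open scoped NNReal ENNReal

lemma eq_of_min_eq_min_of_lt {α : Type*} [LinearOrder α] {a b c : α}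
    (h : min a c = min b c) (hb : b < c) : a = b := by
  rw [min_eq_left hb.le] at h
  rcases le_total a c with hac | hca
  · rwa [min_eq_left hac] at h
  · rw [min_eq_right hca] at h
    exact absurd h.symm hb.ne

namespace MeasureTheory

variable {Ω : Type*}

lemma IsStoppingTime.coe_iSup {ι κ : Type*} [CompleteLattice ι] [Countable κ]
    {m0 : MeasurableSpace Ω} {f : Filtration ι m0} {τ : κ → Ω → ι}
    (hτ : ∀ n, IsStoppingTime f fun ω => (τ n ω : WithTop ι)) :
    IsStoppingTime f fun ω => ((⨆ n, τ n ω : ι) : WithTop ι) := by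
  intro i
  have hset : {ω | ((⨆ n, τ n ω : ι) : WithTop ι) ≤ i} =
      ⋂ n, {ω | (τ n ω : WithTop ι) ≤ i} := by
    ext ω
    simp only [WithTop.coe_le_coe, iSup_le_iff, Set.mem_ofPred_eq, Set.mem_iInter]
  rw [hset]
  exact .iInter fun n => hτ n i

lemma condExp_indicator_const_ae_eq_self_of_ae_eq {E : Type*} [NormedAddCommGroup E]
    [NormedSpace ℝ E] [CompleteSpace E] {m m0 : MeasurableSpace Ω}
    {μ : Measure Ω} [IsFiniteMeasure μ] (hm : m ≤ m0) {s t : Set Ω} (ht : MeasurableSet[m] t)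
    (hst : s =ᵐ[μ] t) (c : E) :
    μ[s.indicator fun _ => c | m] =ᵐ[μ] s.indicator fun _ => c := by
  have hind : s.indicator (fun _ => c) =ᵐ[μ] t.indicator fun _ => c :=
    indicator_ae_eq_of_ae_eq_set hst
  calc μ[s.indicator fun _ => c | m]
      =ᵐ[μ] μ[t.indicator fun _ => c | m] := condExp_congr_ae hind
    _ = t.indicator fun _ => c :=
        condExp_of_stronglyMeasurable hm (stronglyMeasurable_const.indicator ht)
          ((integrable_const c).indicator (hm _ ht))
    _ =ᵐ[μ] s.indicator fun _ => c := hind.symm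

lemma condExp_indicator_lt_ae_eq_self_of_ae_eq_isStoppingTime {ι : Type*} [LinearOrder ι]
    {m0 : MeasurableSpace Ω} {μ : Measure Ω} [IsFiniteMeasure μ]
    {f : Filtration ι m0} {τ σ : Ω → ι}
    (hσ : IsStoppingTime f fun ω => (σ ω : WithTop ι)) (hτσ : τ =ᵐ[μ] σ) (t : ι) :
    μ[{ω | t < τ ω}.indicator fun _ => (1 : ℝ) | f t]
      =ᵐ[μ] {ω | t < τ ω}.indicator fun _ => (1 : ℝ) := by
  have hmeas : MeasurableSet[f t] {ω | t < σ ω} := by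
    simpa only [WithTop.coe_lt_coe] using hσ.measurableSet_gt t
  refine condExp_indicator_const_ae_eq_self_of_ae_eq (f.le t) hmeas ?_ 1
  filter_upwards [hτσ] with ω hω
  change (t < τ ω) = (t < σ ω)
  rw [hω]

lemma exists_isStoppingTime_ae_eq_of_announcing {m0 : MeasurableSpace Ω} {μ : Measure Ω}
    {𝓕 𝓕τ : Filtration ℝ≥0∞ m0} {τ : Ω → ℝ≥0∞}
    (hstruct : ∀ ρ : Ω → ℝ≥0∞, IsStoppingTime 𝓕τ (fun ω => (ρ ω : WithTop ℝ≥0∞)) →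
      (∀ᵐ ω ∂μ, ρ ω < τ ω) → ∃ σ : Ω → ℝ≥0∞, IsStoppingTime 𝓕 (fun ω => (σ ω : WithTop ℝ≥0∞)) ∧
        ∀ᵐ ω ∂μ, min (σ ω) (τ ω) = min (ρ ω) (τ ω))
    {ρ : ℕ → Ω → ℝ≥0∞} (hρst : ∀ n, IsStoppingTime 𝓕τ fun ω => (ρ n ω : WithTop ℝ≥0∞))
    (hρmono : ∀ ω, Monotone fun n => ρ n ω) (hρlt : ∀ n ω, ρ n ω < τ ω)
    (hρlim : ∀ ω, Tendsto (fun n => ρ n ω) atTop (𝓝 (τ ω))) :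
    ∃ σ : Ω → ℝ≥0∞, IsStoppingTime 𝓕 (fun ω => (σ ω : WithTop ℝ≥0∞)) ∧ ∀ᵐ ω ∂μ, τ ω = σ ω := by
  choose σ hσst hσρ using fun n => hstruct (ρ n) (hρst n) (.of_forall (hρlt n))
  refine ⟨fun ω => ⨆ n, σ n ω, IsStoppingTime.coe_iSup hσst, ?_⟩
  filter_upwards [ae_all_iff.mpr hσρ] with ω hω
  have hτ_eq_iSup : τ ω = ⨆ n, ρ n ω :=
    tendsto_nhds_unique (hρlim ω) (tendsto_atTop_iSup (hρmono ω))
  rw [hτ_eq_iSup]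
  exact iSup_congr fun n => (eq_of_min_eq_min_of_lt (hω n) (hρlt n ω)).symm

end MeasureTheory

theorem predictable_time_is_stopping_time_general
    {Ω : Type*} {m0 : MeasurableSpace Ω} (Q : Measure Ω) [IsProbabilityMeasure Q]
    (𝓕 𝓕τ : Filtration ℝ≥0∞ m0)
    (τ : Ω → ℝ≥0∞)
    -- structural fact for progressive enlargements: every `𝓕^τ`-stopping time strictly
    -- before `τ` agrees before `τ` with an `𝓕`-stopping time:
    (hstruct : ∀ ρ : Ω → ℝ≥0∞, IsStoppingTime 𝓕τ (fun ω => (ρ ω : WithTop ℝ≥0∞)) → (∀ᵐ ω ∂Q, ρ ω < τ ω) →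
      ∃ σ : Ω → ℝ≥0∞, IsStoppingTime 𝓕 (fun ω => (σ ω : WithTop ℝ≥0∞)) ∧ ∀ᵐ ω ∂Q, min (σ ω) (τ ω) = min (ρ ω) (τ ω))
    -- `τ` is `𝓕^τ`-predictable: announced by stopping times `ρ_n ↑ τ`, `ρ_n < τ`:
    (ρseq : ℕ → Ω → ℝ≥0∞)
    (hρst : ∀ n, IsStoppingTime 𝓕τ (fun ω => (ρseq n ω : WithTop ℝ≥0∞)))
    (hρmono : ∀ ω, StrictMono fun n => ρseq n ω)
    (hρlt : ∀ n ω, ρseq n ω < τ ω)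
    (hρlim : ∀ ω, Tendsto (fun n => ρseq n ω) atTop (𝓝 (τ ω))) :
    (∃ σ : Ω → ℝ≥0∞, IsStoppingTime 𝓕 (fun ω => (σ ω : WithTop ℝ≥0∞)) ∧ ∀ᵐ ω ∂Q, τ ω = σ ω)
      ∧ ∀ t : ℝ≥0∞, t ≠ ⊤ →
          Q[({ω | t < τ ω}).indicator (fun _ => (1 : ℝ)) | 𝓕 t]
            =ᵐ[Q] ({ω | t < τ ω}).indicator (fun _ => (1 : ℝ)) := by
  obtain ⟨σ, hσ, hτσ⟩ := exists_isStoppingTime_ae_eq_of_announcing hstruct hρst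
    (fun ω => (hρmono ω).monotone) hρlt hρlim
  exact ⟨⟨σ, hσ, hτσ⟩, fun t _ => condExp_indicator_lt_ae_eq_self_of_ae_eq_isStoppingTime hσ hτσ t⟩

/-- Theorem 3.7(ii), contrapositive form: let `𝓕^τ` be the progressive expansion of `𝓕`
by the random time `τ`, and suppose every `𝓕^τ`-stopping time strictly before `τ` agrees
with an `𝓕`-stopping time before `τ`. If `τ` is `𝓕^τ`-predictable (announced by a
strictly increasing sequence of `𝓕^τ`-stopping times `ρ_n ↑ τ`, `ρ_n < τ`), then `τ` is
`Q`-a.s. equal to an `𝓕`-stopping time, and consequently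
`Q(τ > t | 𝓕_t) = 1_{τ > t}` `Q`-a.s. for every `t`. -/
theorem predictable_time_is_stopping_time
    {Ω : Type*} {m0 : MeasurableSpace Ω} (Q : Measure Ω) [IsProbabilityMeasure Q]
    (𝓕 𝓕τ : Filtration ℝ≥0∞ m0)
    -- right-continuity of `𝓕`:
    (hrc : ∀ t : ℝ≥0∞, 𝓕 t = ⨅ u ∈ Set.Ioi t, 𝓕 u)
    -- `𝓕^τ` contains `𝓕` and makes `τ` a stopping time (progressive expansion):
    (hle : ∀ t, 𝓕 t ≤ 𝓕τ t)
    (τ : Ω → ℝ≥0∞) (hτ : IsStoppingTime 𝓕τ (fun ω => (τ ω : WithTop ℝ≥0∞)))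
    -- structural fact for progressive enlargements: every `𝓕^τ`-stopping time strictly
    -- before `τ` agrees before `τ` with an `𝓕`-stopping time:
    (hstruct : ∀ ρ : Ω → ℝ≥0∞, IsStoppingTime 𝓕τ (fun ω => (ρ ω : WithTop ℝ≥0∞)) → (∀ᵐ ω ∂Q, ρ ω < τ ω) →
      ∃ σ : Ω → ℝ≥0∞, IsStoppingTime 𝓕 (fun ω => (σ ω : WithTop ℝ≥0∞)) ∧ ∀ᵐ ω ∂Q, min (σ ω) (τ ω) = min (ρ ω) (τ ω))
    -- `τ` is `𝓕^τ`-predictable: announced by stopping times `ρ_n ↑ τ`, `ρ_n < τ`: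
    (ρseq : ℕ → Ω → ℝ≥0∞)
    (hρst : ∀ n, IsStoppingTime 𝓕τ (fun ω => (ρseq n ω : WithTop ℝ≥0∞)))
    (hρmono : ∀ ω, StrictMono fun n => ρseq n ω)
    (hρlt : ∀ n ω, ρseq n ω < τ ω)
    (hρlim : ∀ ω, Tendsto (fun n => ρseq n ω) atTop (𝓝 (τ ω))) :
    (∃ σ : Ω → ℝ≥0∞, IsStoppingTime 𝓕 (fun ω => (σ ω : WithTop ℝ≥0∞)) ∧ ∀ᵐ ω ∂Q, τ ω = σ ω)
      ∧ ∀ t : ℝ≥0∞, t ≠ ⊤ →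
          Q[({ω | t < τ ω}).indicator (fun _ => (1 : ℝ)) | 𝓕 t]
            =ᵐ[Q] ({ω | t < τ ω}).indicator (fun _ => (1 : ℝ)) :=
  predictable_time_is_stopping_time_general Q 𝓕 𝓕τ τ hstruct ρseq hρst hρmono hρlt hρlim
end
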